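/- arXiv:2503.07508 — 3 statements merged into one kernel-verified Lean document; each statement's English description precedes it below -/
import Mathlib

section
/- Let μ be a compactly supported Borel probability measure on ℝ^k and let L > 0. Then there is a constant C > 0 (independent of R and a) such that for all a ∈ ℝ^k and all R ≥ 1, |μ̂(a)| ≤ C (∫_{B_R(a)} |μ̂(ξ)| dξ + R^{-L}). -/
open MeasureTheory Metric
open scoped FourierTransform RealInnerProductSpace ContDiff

/-- Fourier transform of a measure on `EuclideanSpace ℝ (Fin k)`. -/
noncomputable def ft {k : ℕ} (μ : Measure (EuclideanSpace ℝ (Fin k)))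
    (ξ : EuclideanSpace ℝ (Fin k)) : ℂ :=
  ∫ x, Complex.exp (-(2 * Real.pi * (inner ℝ ξ x : ℝ)) * Complex.I) ∂μ

section helpers

variable {k : ℕ}

private lemma ft_eq (μ : Measure (EuclideanSpace ℝ (Fin k))) (ξ : EuclideanSpace ℝ (Fin k)) :
    ft μ ξ = ∫ x, (Real.fourierChar (-(⟪ξ, x⟫ : ℝ)) : ℂ) ∂μ := by
  unfold ft
  congr 1
  ext x
  rw [Real.fourierChar_apply]
  push_cast
  ring_nf

private lemma norm_ft_le_one (μ : Measure (EuclideanSpace ℝ (Fin k))) [IsProbabilityMeasure μ]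
    (ξ : EuclideanSpace ℝ (Fin k)) : ‖ft μ ξ‖ ≤ 1 := by
  rw [ft_eq]
  refine (norm_integral_le_integral_norm _).trans ?_
  simp [Circle.norm_coe]

private lemma continuous_ft (μ : Measure (EuclideanSpace ℝ (Fin k))) [IsProbabilityMeasure μ] :
    Continuous (ft μ) := by
  have h : ft μ = VectorFourier.fourierIntegral Real.fourierChar μ
      (innerₗ (EuclideanSpace ℝ (Fin k))) (fun _ => (1 : ℂ)) := by
    ext ξ
    rw [ft_eq]
    simp only [VectorFourier.fourierIntegral, innerₗ_apply_apply, Circle.smul_def, smul_eq_mul, mul_one]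
    congr 1
    ext x
    rw [real_inner_comm]
  rw [h]
  exact VectorFourier.fourierIntegral_continuous Real.continuous_fourierChar
    continuous_inner (integrable_const 1)

private lemma exists_g (K : Set (EuclideanSpace ℝ (Fin k))) (hK : IsCompact K) :
    ∃ g : EuclideanSpace ℝ (Fin k) → ℂ,
      ContDiff ℝ ∞ g ∧ HasCompactSupport g ∧ (∀ x ∈ K, g x = 1) := by
  obtain ⟨M, hM⟩ : ∃ M : ℝ, K ⊆ closedBall 0 M := by
    obtain ⟨M, hM⟩ := hK.isBounded.subset_closedBall 0
    exact ⟨M, hM⟩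
  set φ : ContDiffBump (0 : EuclideanSpace ℝ (Fin k)) :=
    ⟨max M 0 + 1, max M 0 + 2, by positivity, by linarith [le_max_right M 0]⟩
  refine ⟨fun x => (φ x : ℂ), ?_, ?_, ?_⟩
  · exact Complex.ofRealCLM.contDiff.comp φ.contDiff
  · exact φ.hasCompactSupport.comp_left (g := Complex.ofReal) rfl
  · intro x hx
    have hmem : x ∈ closedBall (0 : EuclideanSpace ℝ (Fin k)) (max M 0 + 1) := by
      have h1 : dist x 0 ≤ M := hM hx
      simp only [mem_closedBall] at *
      linarith [le_max_left M 0]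
    show (↑(φ x) : ℂ) = 1
    rw [φ.one_of_mem_closedBall hmem]
    norm_num

private lemma integrable_pow_mul_iteratedFDeriv {g : EuclideanSpace ℝ (Fin k) → ℂ}
    (hg : ContDiff ℝ ∞ g) (hsupp : HasCompactSupport g) (p n : ℕ) :
    Integrable (fun v : EuclideanSpace ℝ (Fin k) =>
      ‖v‖ ^ p * ‖iteratedFDeriv ℝ n g v‖) := by
  apply Continuous.integrable_of_hasCompactSupport
  · exact (continuous_norm.pow p).mul (hg.continuous_iteratedFDeriv (mod_cast le_top)).norm
  · exact (hasCompactSupport_norm_iff.mpr (hsupp.iteratedFDeriv n)).mul_left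

private lemma decay_bound {g : EuclideanSpace ℝ (Fin k) → ℂ}
    (hg : ContDiff ℝ ∞ g) (hsupp : HasCompactSupport g) (n : ℕ) :
    ∃ C : ℝ, 0 ≤ C ∧ ∀ w : EuclideanSpace ℝ (Fin k), ‖w‖ ^ n * ‖𝓕 g w‖ ≤ C := by
  obtain ⟨C, hC⟩ : ∃ C, ∀ w : EuclideanSpace ℝ (Fin k),
      ‖w‖ ^ n * ‖iteratedFDeriv ℝ 0 (𝓕 g) w‖ ≤ C :=
    ⟨_, fun w => Real.pow_mul_norm_iteratedFDeriv_fourier_le (K := (⊤ : ℕ∞))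
      (N := (⊤ : ℕ∞)) hg (fun p q _ _ => integrable_pow_mul_iteratedFDeriv hg hsupp p q)
      (k := 0) (n := n) le_top le_top w⟩
  refine ⟨max C 0, le_max_right _ _, fun w => ?_⟩
  have := hC w
  rw [norm_iteratedFDeriv_zero] at this
  exact this.trans (le_max_left _ _)

private lemma bound_B {g : EuclideanSpace ℝ (Fin k) → ℂ}
    (hg : ContDiff ℝ ∞ g) (hsupp : HasCompactSupport g) (m : ℕ) :
    ∃ B : ℝ, 0 < B ∧ ∀ w : EuclideanSpace ℝ (Fin k),
      ‖𝓕 g w‖ ≤ B * (1 + ‖w‖) ^ (-(m : ℝ)) := by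
  obtain ⟨C0, hC0n, hC0⟩ := decay_bound hg hsupp 0
  obtain ⟨Cm, hCmn, hCm⟩ := decay_bound hg hsupp m
  refine ⟨2 ^ m * (C0 + Cm) + 1, by positivity, fun w => ?_⟩
  have hpos : (0 : ℝ) < 1 + ‖w‖ := by positivity
  rw [Real.rpow_neg hpos.le, Real.rpow_natCast, ← div_eq_mul_inv, le_div_iff₀ (by positivity)]
  have h0 : ‖𝓕 g w‖ ≤ C0 := by simpa using hC0 w
  rcases le_total ‖w‖ 1 with h1 | h1
  · have hp : (1 + ‖w‖) ^ m ≤ 2 ^ m := pow_le_pow_left₀ (by positivity) (by linarith) m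
    nlinarith [norm_nonneg (𝓕 g w), pow_nonneg (by positivity : (0:ℝ) ≤ 1 + ‖w‖) m,
      mul_le_mul h0 hp (by positivity) hC0n, pow_pos (by norm_num : (0:ℝ) < 2) m]
  · have hp : (1 + ‖w‖) ^ m ≤ 2 ^ m * ‖w‖ ^ m := by
      rw [← mul_pow]
      exact pow_le_pow_left₀ (by positivity) (by linarith) m
    have hm := hCm w
    nlinarith [norm_nonneg (𝓕 g w), pow_pos (by norm_num : (0:ℝ) < 2) m,
      mul_le_mul_of_nonneg_left hm (pow_nonneg (by norm_num : (0:ℝ) ≤ 2) m),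
      mul_le_mul_of_nonneg_left hp (norm_nonneg (𝓕 g w))]

private lemma integrable_one_add_pow (r : ℝ) (hr : (k : ℝ) < r) :
    Integrable (fun w : EuclideanSpace ℝ (Fin k) => (1 + ‖w‖) ^ (-r)) := by
  apply integrable_one_add_norm
  rwa [finrank_euclideanSpace_fin]

private lemma integrable_fourier_g {g : EuclideanSpace ℝ (Fin k) → ℂ}
    (hg : ContDiff ℝ ∞ g) (hsupp : HasCompactSupport g) :
    Integrable (𝓕 g) := by
  obtain ⟨B, hB0, hB⟩ := bound_B hg hsupp (k + 1)
  refine (((integrable_one_add_pow ((k : ℝ) + 1) (by linarith)).const_mul B)).mono'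
    ?_ (Filter.Eventually.of_forall fun w => ?_)
  · have : Continuous (VectorFourier.fourierIntegral Real.fourierChar volume
        (innerₗ (EuclideanSpace ℝ (Fin k))) g) :=
      VectorFourier.fourierIntegral_continuous Real.continuous_fourierChar
        continuous_inner (hg.continuous.integrable_of_hasCompactSupport hsupp)
    exact this.aestronglyMeasurable
  · have := hB w
    rwa [show ((k : ℝ) + 1) = ((k + 1 : ℕ) : ℝ) by push_cast; ring]

private lemma continuous_fourier_g {g : EuclideanSpace ℝ (Fin k) → ℂ}
    (hgi : Integrable g) : Continuous (𝓕 g) := by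
  have : Continuous (VectorFourier.fourierIntegral Real.fourierChar volume
      (innerₗ (EuclideanSpace ℝ (Fin k))) g) :=
    VectorFourier.fourierIntegral_continuous Real.continuous_fourierChar
      continuous_inner hgi
  exact this

private lemma char_mul (a η x : EuclideanSpace ℝ (Fin k)) :
    (Real.fourierChar (⟪η, x⟫ : ℝ) : ℂ) * (Real.fourierChar (-(⟪a, x⟫ : ℝ)) : ℂ)
      = (Real.fourierChar (-(⟪a - η, x⟫ : ℝ)) : ℂ) := by
  rw [← Circle.coe_mul, ← AddChar.map_add_eq_mul]
  congr 2
  rw [inner_sub_left]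
  ring

private lemma key_identity (μ : Measure (EuclideanSpace ℝ (Fin k))) [IsProbabilityMeasure μ]
    {g : EuclideanSpace ℝ (Fin k) → ℂ} (hg : ContDiff ℝ ∞ g)
    (hsupp : HasCompactSupport g) (hone : ∀ᵐ x ∂μ, g x = 1)
    (a : EuclideanSpace ℝ (Fin k)) :
    ft μ a = ∫ η, 𝓕 g η * ft μ (a - η) := by
  have hgi : Integrable g := hg.continuous.integrable_of_hasCompactSupport hsupp
  have hFi : Integrable (𝓕 g) := integrable_fourier_g hg hsupp
  have hinv : ∀ x, g x = ∫ η, (Real.fourierChar (⟪η, x⟫ : ℝ) : ℂ) • 𝓕 g η := by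
    intro x
    conv_lhs => rw [← hg.continuous.fourierInv_fourier_eq hgi hFi]
    rw [Real.fourierInv_eq]
    simp_rw [Circle.smul_def]
  have step1 : ft μ a = ∫ x, g x * (Real.fourierChar (-(⟪a, x⟫ : ℝ)) : ℂ) ∂μ := by
    rw [ft_eq]
    refine integral_congr_ae ?_
    filter_upwards [hone] with x hx
    rw [hx, one_mul]
  rw [step1]
  have step2 : ∀ x, g x * (Real.fourierChar (-(⟪a, x⟫ : ℝ)) : ℂ)
      = ∫ η, 𝓕 g η * (Real.fourierChar (-(⟪a - η, x⟫ : ℝ)) : ℂ) := by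
    intro x
    rw [hinv x, ← integral_mul_const]
    congr 1
    ext η
    rw [smul_eq_mul,
      mul_comm ((Real.fourierChar (⟪η, x⟫ : ℝ) : ℂ)) (𝓕 g η), mul_assoc, char_mul]
  simp_rw [step2]
  have hint : Integrable (Function.uncurry fun x η =>
      𝓕 g η * (Real.fourierChar (-(⟪a - η, x⟫ : ℝ)) : ℂ)) (μ.prod volume) := by
    have hb : Integrable (fun p : EuclideanSpace ℝ (Fin k) × EuclideanSpace ℝ (Fin k) =>
        (1 : ℝ) * ‖𝓕 g p.2‖) (μ.prod volume) :=
      Integrable.mul_prod (integrable_const 1) hFi.norm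
    refine hb.mono' ?_ (Filter.Eventually.of_forall fun p => ?_)
    · apply Continuous.aestronglyMeasurable
      refine Continuous.mul ((continuous_fourier_g hgi).comp continuous_snd) ?_
      exact continuous_subtype_val.comp (Real.continuous_fourierChar.comp
        (((continuous_const.sub continuous_snd).inner continuous_fst).neg))
    · simp [Function.uncurry, Circle.norm_coe]
  rw [integral_integral_swap hint]
  congr 1
  ext η
  rw [integral_const_mul, ft_eq]

private lemma integral_ball_shift (f : EuclideanSpace ℝ (Fin k) → ℝ)
    (a : EuclideanSpace ℝ (Fin k)) (R : ℝ) :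
    ∫ η in ball (0 : EuclideanSpace ℝ (Fin k)) R, f (a - η) = ∫ ξ in ball a R, f ξ := by
  rw [← integral_indicator measurableSet_ball, ← integral_indicator measurableSet_ball]
  have h : ∀ η, (ball (0 : EuclideanSpace ℝ (Fin k)) R).indicator (fun η => f (a - η)) η
      = (ball a R).indicator f (a - η) := by
    intro η
    have hmem : η ∈ ball (0 : EuclideanSpace ℝ (Fin k)) R ↔ a - η ∈ ball a R := by
      simp [mem_ball, dist_eq_norm, sub_sub_cancel_left, dist_zero_right]
    by_cases hη : η ∈ ball (0 : EuclideanSpace ℝ (Fin k)) R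
    · rw [Set.indicator_of_mem hη, Set.indicator_of_mem (hmem.mp hη)]
    · rw [Set.indicator_of_notMem hη, Set.indicator_of_notMem (fun hc => hη (hmem.mpr hc))]
  simp_rw [h]
  exact integral_sub_left_eq_self ((ball a R).indicator f) volume a

end helpers

theorem stmt0 {k : ℕ} (μ : Measure (EuclideanSpace ℝ (Fin k)))
    [IsProbabilityMeasure μ] (K : Set (EuclideanSpace ℝ (Fin k)))
    (hK : IsCompact K) (hμK : μ Kᶜ = 0) (L : ℝ) (hL : 0 < L) :
    ∃ C > (0 : ℝ), ∀ (a : EuclideanSpace ℝ (Fin k)) (R : ℝ), 1 ≤ R →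
      ‖ft μ a‖ ≤ C * ((∫ ξ in ball a R, ‖ft μ ξ‖) + R ^ (-L)) := by
  obtain ⟨g, hg, hsupp, hgK⟩ := exists_g K hK
  have hone : ∀ᵐ x ∂μ, g x = 1 := by
    have hae : ∀ᵐ x ∂μ, x ∈ K := by
      rw [ae_iff]
      simpa [Set.compl_def] using hμK
    filter_upwards [hae] with x hx using hgK x hx
  set q : ℕ := ⌈L⌉₊ with hq
  set m : ℕ := k + 1 + q with hmdef
  obtain ⟨B, hB0, hB⟩ := bound_B hg hsupp m
  have hFi : Integrable (𝓕 g) := integrable_fourier_g hg hsupp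
  have hFc : Continuous (𝓕 g) :=
    continuous_fourier_g (hg.continuous.integrable_of_hasCompactSupport hsupp)
  have hI1int : Integrable (fun w : EuclideanSpace ℝ (Fin k) => (1 + ‖w‖) ^ (-((k : ℝ) + 1))) :=
    integrable_one_add_pow _ (by linarith)
  set I1 : ℝ := ∫ w : EuclideanSpace ℝ (Fin k), (1 + ‖w‖) ^ (-((k : ℝ) + 1)) with hI1
  have hI1nonneg : 0 ≤ I1 := integral_nonneg fun w => by positivity
  have hftle : ∀ ξ, ‖ft μ ξ‖ ≤ 1 := norm_ft_le_one μ
  have hb_le : ∀ η : EuclideanSpace ℝ (Fin k), ‖𝓕 g η‖ ≤ B := by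
    intro η
    refine (hB η).trans ?_
    have h1 : ((1 : ℝ) + ‖η‖) ^ (-(m : ℝ)) ≤ 1 :=
      Real.rpow_le_one_of_one_le_of_nonpos (by linarith [norm_nonneg η]) (by simp)
    nlinarith
  refine ⟨B * (1 + I1) + 1, by positivity, fun a R hR => ?_⟩
  have hR0 : (0 : ℝ) < R := lt_of_lt_of_le one_pos hR
  have hRL : (0 : ℝ) < R ^ (-L) := Real.rpow_pos_of_pos hR0 _
  set h : EuclideanSpace ℝ (Fin k) → ℝ := fun η => ‖𝓕 g η‖ * ‖ft μ (a - η)‖ with hh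
  have hcont_h : Continuous h :=
    hFc.norm.mul ((continuous_ft μ).comp (continuous_const.sub continuous_id)).norm
  have hInt_h : Integrable h := by
    refine hFi.norm.mono' hcont_h.aestronglyMeasurable (Filter.Eventually.of_forall fun η => ?_)
    have : h η ≤ ‖𝓕 g η‖ := mul_le_of_le_one_right (norm_nonneg _) (hftle _)
    have hnn : 0 ≤ h η := mul_nonneg (norm_nonneg _) (norm_nonneg _)
    rwa [Real.norm_eq_abs, abs_of_nonneg hnn]
  have hnorm1 : ‖ft μ a‖ ≤ ∫ η, h η := by
    rw [key_identity μ hg hsupp hone a]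
    refine (norm_integral_le_integral_norm _).trans (le_of_eq ?_)
    simp_rw [norm_mul]
    rfl
  have hsplit : (∫ η, h η)
      = (∫ η in ball (0 : EuclideanSpace ℝ (Fin k)) R, h η)
        + ∫ η in (ball (0 : EuclideanSpace ℝ (Fin k)) R)ᶜ, h η :=
    (integral_add_compl measurableSet_ball hInt_h).symm
  -- term 1
  have hT1 : (∫ η in ball (0 : EuclideanSpace ℝ (Fin k)) R, h η)
      ≤ B * ∫ ξ in ball a R, ‖ft μ ξ‖ := by
    have hint2 : IntegrableOn (fun η => B * ‖ft μ (a - η)‖)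
        (ball (0 : EuclideanSpace ℝ (Fin k)) R) := by
      have hc : Continuous fun η : EuclideanSpace ℝ (Fin k) => B * ‖ft μ (a - η)‖ :=
        continuous_const.mul ((continuous_ft μ).comp (continuous_const.sub continuous_id)).norm
      exact (hc.continuousOn.integrableOn_compact (isCompact_closedBall _ R)).mono_set
        ball_subset_closedBall
    have hmono : (∫ η in ball (0 : EuclideanSpace ℝ (Fin k)) R, h η)
        ≤ ∫ η in ball (0 : EuclideanSpace ℝ (Fin k)) R, B * ‖ft μ (a - η)‖ :=
      setIntegral_mono_on hInt_h.integrableOn hint2 measurableSet_ball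
        (fun η _ => mul_le_mul_of_nonneg_right (hb_le η) (norm_nonneg _))
    refine hmono.trans (le_of_eq ?_)
    rw [integral_const_mul]
    congr 1
    exact integral_ball_shift (fun ξ => ‖ft μ ξ‖) a R
  -- term 2
  have hT2 : (∫ η in (ball (0 : EuclideanSpace ℝ (Fin k)) R)ᶜ, h η)
      ≤ B * I1 * R ^ (-L) := by
    have hpt : ∀ η ∈ (ball (0 : EuclideanSpace ℝ (Fin k)) R)ᶜ,
        h η ≤ (B * R ^ (-L)) * (1 + ‖η‖) ^ (-((k : ℝ) + 1)) := by
      intro η hη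
      have hηR : R ≤ ‖η‖ := by
        simpa [mem_ball, dist_zero_right, not_lt] using hη
      have h1 : h η ≤ ‖𝓕 g η‖ := mul_le_of_le_one_right (norm_nonneg _) (hftle _)
      have h2 : ‖𝓕 g η‖ ≤ B * (1 + ‖η‖) ^ (-(m : ℝ)) := hB η
      have h3 : ((1 : ℝ) + ‖η‖) ^ (-(m : ℝ))
          = (1 + ‖η‖) ^ (-((k : ℝ) + 1)) * (1 + ‖η‖) ^ (-(q : ℝ)) := by
        rw [← Real.rpow_add (by positivity)]
        congr 1
        rw [hmdef]
        push_cast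
        ring
      have h4 : ((1 : ℝ) + ‖η‖) ^ (-(q : ℝ)) ≤ R ^ (-L) := by
        have h5 : ((1 : ℝ) + ‖η‖) ^ (-(q : ℝ)) ≤ R ^ (-(q : ℝ)) :=
          Real.rpow_le_rpow_of_nonpos hR0 (by linarith [norm_nonneg η])
            (by simp)
        refine h5.trans (Real.rpow_le_rpow_of_exponent_le hR ?_)
        have := Nat.le_ceil L
        simp only [neg_le_neg_iff]
        exact_mod_cast this
      have hx : (0 : ℝ) ≤ (1 + ‖η‖) ^ (-((k : ℝ) + 1)) := by positivity
      calc h η ≤ B * (1 + ‖η‖) ^ (-(m : ℝ)) := h1.trans h2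
        _ = (B * (1 + ‖η‖) ^ (-((k : ℝ) + 1))) * (1 + ‖η‖) ^ (-(q : ℝ)) := by
            rw [h3]; ring
        _ ≤ (B * (1 + ‖η‖) ^ (-((k : ℝ) + 1))) * R ^ (-L) :=
            mul_le_mul_of_nonneg_left h4 (by positivity)
        _ = (B * R ^ (-L)) * (1 + ‖η‖) ^ (-((k : ℝ) + 1)) := by ring
    have hmono : (∫ η in (ball (0 : EuclideanSpace ℝ (Fin k)) R)ᶜ, h η)
        ≤ ∫ η in (ball (0 : EuclideanSpace ℝ (Fin k)) R)ᶜ,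
            (B * R ^ (-L)) * (1 + ‖η‖) ^ (-((k : ℝ) + 1)) :=
      setIntegral_mono_on hInt_h.integrableOn ((hI1int.const_mul _).integrableOn)
        measurableSet_ball.compl hpt
    refine hmono.trans ?_
    rw [integral_const_mul]
    have htail : (∫ η in (ball (0 : EuclideanSpace ℝ (Fin k)) R)ᶜ,
        (1 + ‖η‖) ^ (-((k : ℝ) + 1))) ≤ I1 :=
      setIntegral_le_integral hI1int (Filter.Eventually.of_forall fun η => by positivity)
    calc (B * R ^ (-L)) * ∫ η in (ball (0 : EuclideanSpace ℝ (Fin k)) R)ᶜ,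
          (1 + ‖η‖) ^ (-((k : ℝ) + 1))
        ≤ (B * R ^ (-L)) * I1 := mul_le_mul_of_nonneg_left htail (by positivity)
      _ = B * I1 * R ^ (-L) := by ring
  have hint_nonneg : 0 ≤ ∫ ξ in ball a R, ‖ft μ ξ‖ :=
    integral_nonneg fun ξ => norm_nonneg _
  calc ‖ft μ a‖ ≤ ∫ η, h η := hnorm1
    _ = _ + _ := hsplit
    _ ≤ B * (∫ ξ in ball a R, ‖ft μ ξ‖) + B * I1 * R ^ (-L) := add_le_add hT1 hT2
    _ ≤ (B * (1 + I1) + 1) * ((∫ ξ in ball a R, ‖ft μ ξ‖) + R ^ (-L)) := by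
        nlinarith [mul_nonneg (mul_nonneg hB0.le hI1nonneg) hint_nonneg,
          mul_nonneg hB0.le hRL.le, hRL.le, hint_nonneg]
end

section
/- Let μ be a Borel probability measure on ℝ^k with compact support and let 0 < p ≤ q. Then (p/q)·κ_q(μ) ≤ κ_p(μ), where κ_p denotes the Fourier l^p dimension. -/
open MeasureTheory Metric

/-- The Fourier `l^p` dimension of a measure `μ` on `ℝ^k`. -/
noncomputable def fourierLpDim {k : ℕ} (μ : Measure (EuclideanSpace ℝ (Fin k))) (p : ℝ) : ℝ :=
  sSup {s : ℝ | 0 ≤ s ∧ s < k ∧ ∃ C > (0 : ℝ), ∀ R : ℝ, 1 ≤ R →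
    (∫ ξ in ball (0 : EuclideanSpace ℝ (Fin k)) R, ‖ft μ ξ‖ ^ p) ≤ C * R ^ ((k : ℝ) - s)}

lemma norm_exp_aux {k : ℕ} (ξ x : EuclideanSpace ℝ (Fin k)) :
    ‖Complex.exp (-(2 * Real.pi * (inner ℝ ξ x : ℝ)) * Complex.I)‖ = 1 := by
  rw [Complex.norm_exp]
  norm_num

lemma ft_norm_le_one {k : ℕ} (μ : Measure (EuclideanSpace ℝ (Fin k)))
    [IsProbabilityMeasure μ] (ξ : EuclideanSpace ℝ (Fin k)) : ‖ft μ ξ‖ ≤ 1 := by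
  have h := norm_integral_le_integral_norm (μ := μ)
    (f := fun x => Complex.exp (-(2 * Real.pi * (inner ℝ ξ x : ℝ)) * Complex.I))
  refine h.trans ?_
  simp only [norm_exp_aux, integral_const, measure_univ, probReal_univ, ENNReal.toReal_one, smul_eq_mul,
    mul_one, le_refl]

lemma exp_cont_aux {k : ℕ} (x : EuclideanSpace ℝ (Fin k)) :
    Continuous fun ξ : EuclideanSpace ℝ (Fin k) =>
      Complex.exp (-(2 * Real.pi * (inner ℝ ξ x : ℝ)) * Complex.I) := by
  have h1 : Continuous fun ξ : EuclideanSpace ℝ (Fin k) => (inner ℝ ξ x : ℝ) :=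
    continuous_id.inner continuous_const
  exact Complex.continuous_exp.comp
    (((continuous_const.mul (Complex.continuous_ofReal.comp h1)).neg).mul continuous_const)

lemma exp_cont_aux2 {k : ℕ} (ξ : EuclideanSpace ℝ (Fin k)) :
    Continuous fun x : EuclideanSpace ℝ (Fin k) =>
      Complex.exp (-(2 * Real.pi * (inner ℝ ξ x : ℝ)) * Complex.I) := by
  have h1 : Continuous fun x : EuclideanSpace ℝ (Fin k) => (inner ℝ ξ x : ℝ) :=
    continuous_const.inner continuous_id
  exact Complex.continuous_exp.comp
    (((continuous_const.mul (Complex.continuous_ofReal.comp h1)).neg).mul continuous_const)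

lemma ft_continuous {k : ℕ} (μ : Measure (EuclideanSpace ℝ (Fin k)))
    [IsFiniteMeasure μ] : Continuous (ft μ) := by
  apply continuous_of_dominated (bound := fun _ => 1)
  · intro ξ
    exact (exp_cont_aux2 ξ).aestronglyMeasurable
  · intro ξ
    filter_upwards with x
    rw [norm_exp_aux]
  · exact integrable_const 1
  · filter_upwards with x
    exact exp_cont_aux x

lemma integrableOn_ft {k : ℕ} (μ : Measure (EuclideanSpace ℝ (Fin k)))
    [IsProbabilityMeasure μ] {p : ℝ} (hp : 0 < p) (R : ℝ) :
    IntegrableOn (fun ξ => ‖ft μ ξ‖ ^ p) (ball (0:EuclideanSpace ℝ (Fin k)) R) := by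
  apply Integrable.mono' (g := fun _ => (1:ℝ))
    (integrableOn_const measure_ball_lt_top.ne)
  · exact (((ft_continuous μ).norm.rpow_const
      (fun x => Or.inr hp.le)).aestronglyMeasurable).restrict
  · filter_upwards with ξ
    rw [Real.norm_eq_abs, abs_of_nonneg (Real.rpow_nonneg (norm_nonneg _) p)]
    exact Real.rpow_le_one (norm_nonneg _) (ft_norm_le_one μ ξ) hp.le

lemma vol_ball_toReal {k : ℕ} {R : ℝ} (hR : 0 < R) :
    (volume (ball (0:EuclideanSpace ℝ (Fin k)) R)).toReal
      = R ^ (k:ℝ) * (volume (ball (0:EuclideanSpace ℝ (Fin k)) 1)).toReal := by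
  rw [Measure.addHaar_ball_of_pos volume 0 hR, ENNReal.toReal_mul,
    ENNReal.toReal_ofReal (by positivity), finrank_euclideanSpace_fin,
    ← Real.rpow_natCast R k]

lemma rpow_le_aux {f ε p q : ℝ} (hf : 0 ≤ f) (hε : 0 < ε) (hp : 0 < p) (hpq : p ≤ q) :
    f ^ p ≤ ε ^ (p - q) * f ^ q + ε ^ p := by
  rcases le_total f ε with h | h
  · have h1 : f ^ p ≤ ε ^ p := Real.rpow_le_rpow hf h hp.le
    have h2 : 0 ≤ ε ^ (p - q) * f ^ q := by positivity
    linarith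
  · have hf0 : 0 < f := lt_of_lt_of_le hε h
    have h3 : f ^ (p - q) ≤ ε ^ (p - q) :=
      Real.rpow_le_rpow_of_nonpos hε h (by linarith)
    have h4 : f ^ p = f ^ q * f ^ (p - q) := by
      rw [← Real.rpow_add hf0]; ring_nf
    have h5 : f ^ q * f ^ (p - q) ≤ f ^ q * ε ^ (p - q) :=
      mul_le_mul_of_nonneg_left h3 (Real.rpow_nonneg hf0.le q)
    have h6 : (0:ℝ) ≤ ε ^ p := by positivity
    rw [h4]
    linarith [h5]

lemma key_bound {k : ℕ} (μ : Measure (EuclideanSpace ℝ (Fin k)))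
    [IsProbabilityMeasure μ] {p q s C : ℝ} (hp : 0 < p) (hpq : p ≤ q)
    (hs0 : 0 ≤ s) (hC : 0 < C)
    (hb : ∀ R : ℝ, 1 ≤ R →
      (∫ ξ in ball (0:EuclideanSpace ℝ (Fin k)) R, ‖ft μ ξ‖ ^ q) ≤ C * R ^ ((k:ℝ) - s)) :
    ∀ R : ℝ, 1 ≤ R →
      (∫ ξ in ball (0:EuclideanSpace ℝ (Fin k)) R, ‖ft μ ξ‖ ^ p)
        ≤ (C + (volume (ball (0:EuclideanSpace ℝ (Fin k)) 1)).toReal)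
            * R ^ ((k:ℝ) - p / q * s) := by
  intro R hR
  have hq : 0 < q := hp.trans_le hpq
  have hR0 : (0:ℝ) < R := lt_of_lt_of_le one_pos hR
  set c₁ : ℝ := (volume (ball (0:EuclideanSpace ℝ (Fin k)) 1)).toReal with hc₁
  have hc₁0 : 0 ≤ c₁ := ENNReal.toReal_nonneg
  set ε : ℝ := R ^ (-(s/q)) with hεdef
  have hε : 0 < ε := Real.rpow_pos_of_pos hR0 _
  have hint_q := integrableOn_ft μ hq R
  have hint_c : IntegrableOn (fun _ => ε ^ p) (ball (0:EuclideanSpace ℝ (Fin k)) R) :=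
    integrableOn_const measure_ball_lt_top.ne
  have step1 : (∫ ξ in ball (0:EuclideanSpace ℝ (Fin k)) R, ‖ft μ ξ‖ ^ p)
      ≤ ∫ ξ in ball (0:EuclideanSpace ℝ (Fin k)) R, (ε ^ (p - q) * ‖ft μ ξ‖ ^ q + ε ^ p) := by
    refine integral_mono (integrableOn_ft μ hp R) ((hint_q.const_mul _).add hint_c) ?_
    intro ξ
    exact rpow_le_aux (norm_nonneg _) hε hp hpq
  have step2 : (∫ ξ in ball (0:EuclideanSpace ℝ (Fin k)) R,
        (ε ^ (p - q) * ‖ft μ ξ‖ ^ q + ε ^ p))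
      = ε ^ (p - q) * (∫ ξ in ball (0:EuclideanSpace ℝ (Fin k)) R, ‖ft μ ξ‖ ^ q)
        + (volume (ball (0:EuclideanSpace ℝ (Fin k)) R)).toReal * ε ^ p := by
    rw [integral_add (hint_q.const_mul _) hint_c, integral_const_mul, setIntegral_const,
      smul_eq_mul, measureReal_def]
  have e1 : ε ^ (p - q) * R ^ ((k:ℝ) - s) = R ^ ((k:ℝ) - p / q * s) := by
    rw [hεdef, ← Real.rpow_mul hR0.le, ← Real.rpow_add hR0]
    congr 1
    field_simp
    ring
  have e2 : ε ^ p * R ^ (k:ℝ) = R ^ ((k:ℝ) - p / q * s) := by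
    rw [hεdef, ← Real.rpow_mul hR0.le, ← Real.rpow_add hR0]
    congr 1
    field_simp
    ring
  have step3 : ε ^ (p - q) * (∫ ξ in ball (0:EuclideanSpace ℝ (Fin k)) R, ‖ft μ ξ‖ ^ q)
      ≤ ε ^ (p - q) * (C * R ^ ((k:ℝ) - s)) :=
    mul_le_mul_of_nonneg_left (hb R hR) (Real.rpow_nonneg hε.le _)
  calc (∫ ξ in ball (0:EuclideanSpace ℝ (Fin k)) R, ‖ft μ ξ‖ ^ p)
      ≤ ε ^ (p - q) * (∫ ξ in ball (0:EuclideanSpace ℝ (Fin k)) R, ‖ft μ ξ‖ ^ q)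
        + (volume (ball (0:EuclideanSpace ℝ (Fin k)) R)).toReal * ε ^ p := by
        rw [← step2]; exact step1
    _ ≤ ε ^ (p - q) * (C * R ^ ((k:ℝ) - s))
        + (R ^ (k:ℝ) * c₁) * ε ^ p := by
        rw [vol_ball_toReal hR0]
        exact add_le_add step3 le_rfl
    _ = C * (ε ^ (p - q) * R ^ ((k:ℝ) - s)) + c₁ * (ε ^ p * R ^ (k:ℝ)) := by ring
    _ = (C + c₁) * R ^ ((k:ℝ) - p / q * s) := by rw [e1, e2]; ring

theorem stmt2 {k : ℕ} (μ : Measure (EuclideanSpace ℝ (Fin k)))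
    [IsProbabilityMeasure μ] (K : Set (EuclideanSpace ℝ (Fin k)))
    (hK : IsCompact K) (hμK : μ Kᶜ = 0)
    (p q : ℝ) (hp : 0 < p) (hpq : p ≤ q) :
    (p / q) * fourierLpDim μ q ≤ fourierLpDim μ p := by
  have hq : 0 < q := hp.trans_le hpq
  set Sp := {s : ℝ | 0 ≤ s ∧ s < k ∧ ∃ C > (0 : ℝ), ∀ R : ℝ, 1 ≤ R →
    (∫ ξ in ball (0 : EuclideanSpace ℝ (Fin k)) R, ‖ft μ ξ‖ ^ p) ≤ C * R ^ ((k : ℝ) - s)}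
    with hSp
  set Sq := {s : ℝ | 0 ≤ s ∧ s < k ∧ ∃ C > (0 : ℝ), ∀ R : ℝ, 1 ≤ R →
    (∫ ξ in ball (0 : EuclideanSpace ℝ (Fin k)) R, ‖ft μ ξ‖ ^ q) ≤ C * R ^ ((k : ℝ) - s)}
    with hSq
  have hdimp : fourierLpDim μ p = sSup Sp := rfl
  have hdimq : fourierLpDim μ q = sSup Sq := rfl
  rw [hdimp, hdimq]
  have hbddp : BddAbove Sp := ⟨k, fun s hs => hs.2.1.le⟩
  have hRHS : 0 ≤ sSup Sp := Real.sSup_nonneg (fun x hx => hx.1)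
  have hmem : ∀ s ∈ Sq, p / q * s ∈ Sp := by
    intro s hs
    obtain ⟨hs0, hsk, C, hC, hb⟩ := hs
    refine ⟨by positivity, ?_, C + (volume (ball (0:EuclideanSpace ℝ (Fin k)) 1)).toReal,
      add_pos_of_pos_of_nonneg hC ENNReal.toReal_nonneg, key_bound μ hp hpq hs0 hC hb⟩
    exact lt_of_le_of_lt (mul_le_of_le_one_left hs0 ((div_le_one hq).mpr hpq)) hsk
  by_cases hne : Sq.Nonempty
  · have h1 : sSup Sq ≤ q / p * sSup Sp := by
      refine csSup_le hne (fun s hs => ?_)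
      have h2 : p / q * s ≤ sSup Sp := le_csSup hbddp (hmem s hs)
      have h3 : q / p * (p / q * s) ≤ q / p * sSup Sp :=
        mul_le_mul_of_nonneg_left h2 (by positivity)
      have h4 : q / p * (p / q * s) = s := by field_simp
      linarith [h3, h4 ▸ h3]
    have h5 : p / q * sSup Sq ≤ p / q * (q / p * sSup Sp) :=
      mul_le_mul_of_nonneg_left h1 (by positivity)
    have h6 : p / q * (q / p * sSup Sp) = sSup Sp := by field_simp
    linarith
  · rw [Set.not_nonempty_iff_eq_empty] at hne
    rw [hne, Real.sSup_empty, mul_zero]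
    exact hRHS
end

section
/- Let f : ℂ → ℂ be holomorphic with f = U + iV, U and V twice continuously differentiable, and let v ∈ ℝ² be a unit vector. Then the Hessian matrix of v₁U + v₂V at any point (x,y) has eigenvalues ±|f''(x+iy)|. -/
/-- Partial derivative in the first variable of a function on `ℝ × ℝ`. -/
noncomputable def pdx (g : ℝ × ℝ → ℝ) (p : ℝ × ℝ) : ℝ :=
  deriv (fun s => g (s, p.2)) p.1

/-- Partial derivative in the second variable of a function on `ℝ × ℝ`. -/
noncomputable def pdy (g : ℝ × ℝ → ℝ) (p : ℝ × ℝ) : ℝ :=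
  deriv (fun t => g (p.1, t)) p.2

/-- The Hessian matrix of a function on `ℝ × ℝ`. -/
noncomputable def hess (g : ℝ × ℝ → ℝ) (p : ℝ × ℝ) : Matrix (Fin 2) (Fin 2) ℝ :=
  !![pdx (pdx g) p, pdy (pdx g) p; pdx (pdy g) p, pdy (pdy g) p]

lemma eigAux (a b c : ℝ) (h : a ^ 2 + b ^ 2 = c ^ 2) :
    Module.End.HasEigenvalue (Matrix.toLin' !![a, b; b, -a]) c := by
  rcases eq_or_ne (![c + a, b]) 0 with h1 | h1
  · rcases eq_or_ne (![b, c - a]) 0 with h2 | h2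
    · have hca : c + a = 0 := congrFun h1 0
      have hb : b = 0 := congrFun h1 1
      have hca' : c - a = 0 := congrFun h2 1
      have hc : c = 0 := by linarith
      have ha : a = 0 := by linarith
      apply Module.End.hasEigenvalue_of_hasEigenvector (x := ![1, 0])
      constructor
      · rw [Module.End.mem_eigenspace_iff]
        funext i
        fin_cases i <;>
          simp [Matrix.toLin'_apply, Matrix.mulVec, dotProduct,
            Fin.sum_univ_two, ha, hb, hc]
      · intro hcon
        exact one_ne_zero (congrFun hcon 0)
    · apply Module.End.hasEigenvalue_of_hasEigenvector (x := ![b, c - a])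
      refine ⟨?_, h2⟩
      rw [Module.End.mem_eigenspace_iff]
      funext i
      fin_cases i <;>
        simp [Matrix.toLin'_apply, Matrix.mulVec, dotProduct,
          Fin.sum_univ_two] <;> nlinarith [h]
  · apply Module.End.hasEigenvalue_of_hasEigenvector (x := ![c + a, b])
    refine ⟨?_, h1⟩
    rw [Module.End.mem_eigenspace_iff]
    funext i
    fin_cases i <;>
      simp [Matrix.toLin'_apply, Matrix.mulVec, dotProduct,
        Fin.sum_univ_two] <;> nlinarith [h]

lemma horizD (g : ℂ → ℂ) (hg : Differentiable ℂ g) (x y : ℝ) :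
    HasDerivAt (fun s : ℝ => g (↑s + ↑y * Complex.I)) (deriv g (↑x + ↑y * Complex.I)) x := by
  have h1 : HasDerivAt (fun s : ℝ => (↑s + ↑y * Complex.I : ℂ)) 1 x :=
    (Complex.ofRealCLM.hasDerivAt).add_const _
  simpa [Function.comp_def] using HasDerivAt.scomp x ((hg _).hasDerivAt) h1

lemma vertD (g : ℂ → ℂ) (hg : Differentiable ℂ g) (x y : ℝ) :
    HasDerivAt (fun t : ℝ => g (↑x + ↑t * Complex.I))
      (deriv g (↑x + ↑y * Complex.I) * Complex.I) y := by
  have h1 : HasDerivAt (fun t : ℝ => (↑x + ↑t * Complex.I : ℂ)) Complex.I y := by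
    have := (Complex.ofRealCLM.hasDerivAt (x := y)).mul_const Complex.I
    simpa using this.const_add (↑x : ℂ)
  simpa [smul_eq_mul, mul_comm, Function.comp_def] using HasDerivAt.scomp y ((hg _).hasDerivAt) h1

lemma reD {h : ℝ → ℂ} {c : ℂ} {x : ℝ} (hh : HasDerivAt h c x) :
    HasDerivAt (fun s => (h s).re) c.re x := by
  simpa [Function.comp_def] using Complex.reCLM.hasFDerivAt.comp_hasDerivAt x hh

lemma imD {h : ℝ → ℂ} {c : ℂ} {x : ℝ} (hh : HasDerivAt h c x) :
    HasDerivAt (fun s => (h s).im) c.im x := by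
  simpa [Function.comp_def] using Complex.imCLM.hasFDerivAt.comp_hasDerivAt x hh

theorem stmt6 (f : ℂ → ℂ) (U V : ℝ × ℝ → ℝ) (hf : Differentiable ℂ f)
    (hU : ContDiff ℝ 2 U) (hV : ContDiff ℝ 2 V)
    (hfUV : ∀ x y : ℝ, f (x + y * Complex.I) = U (x, y) + V (x, y) * Complex.I)
    (v₁ v₂ : ℝ) (hv : v₁ ^ 2 + v₂ ^ 2 = 1) (x y : ℝ) :
    Module.End.HasEigenvalue
      (Matrix.toLin' (hess (fun q => v₁ * U q + v₂ * V q) (x, y)))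
      ‖deriv (deriv f) (x + y * Complex.I)‖ ∧
    Module.End.HasEigenvalue
      (Matrix.toLin' (hess (fun q => v₁ * U q + v₂ * V q) (x, y)))
      (-‖deriv (deriv f) (x + y * Complex.I)‖) := by
  have hf' : Differentiable ℂ (deriv f) := by
    have h := (hf.differentiableOn.analyticOnNhd isOpen_univ).deriv
    exact fun z => (h z (Set.mem_univ z)).differentiableAt
  set W : ℝ × ℝ → ℝ := fun q => v₁ * U q + v₂ * V q with hW
  have hfU : ∀ s t : ℝ, U (s, t) = (f (↑s + ↑t * Complex.I)).re := by
    intro s t; rw [hfUV s t]; simp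
  have hfV : ∀ s t : ℝ, V (s, t) = (f (↑s + ↑t * Complex.I)).im := by
    intro s t; rw [hfUV s t]; simp
  have hpdxW : ∀ s t : ℝ, pdx W (s, t) =
      v₁ * (deriv f (↑s + ↑t * Complex.I)).re + v₂ * (deriv f (↑s + ↑t * Complex.I)).im := by
    intro s t
    have hfn : (fun s' : ℝ => W (s', t)) =
        fun s' : ℝ => v₁ * (f (↑s' + ↑t * Complex.I)).re + v₂ * (f (↑s' + ↑t * Complex.I)).im := by
      funext s'; simp only [hW, hfU, hfV]
    have hd := ((reD (horizD f hf s t)).const_mul v₁).add ((imD (horizD f hf s t)).const_mul v₂)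
    show deriv (fun s' : ℝ => W (s', t)) s = _
    rw [hfn]
    exact hd.deriv
  have hpdyW : ∀ s t : ℝ, pdy W (s, t) =
      v₁ * -(deriv f (↑s + ↑t * Complex.I)).im + v₂ * (deriv f (↑s + ↑t * Complex.I)).re := by
    intro s t
    have hfn : (fun t' : ℝ => W (s, t')) =
        fun t' : ℝ => v₁ * (f (↑s + ↑t' * Complex.I)).re + v₂ * (f (↑s + ↑t' * Complex.I)).im := by
      funext t'; simp only [hW, hfU, hfV]
    have hd := ((reD (vertD f hf s t)).const_mul v₁).add ((imD (vertD f hf s t)).const_mul v₂)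
    show deriv (fun t' : ℝ => W (s, t')) t = _
    rw [hfn]
    simpa [Complex.mul_I_re, Complex.mul_I_im, Pi.add_def] using hd.deriv
  set A := (deriv (deriv f) (↑x + ↑y * Complex.I)).re with hA
  set B := (deriv (deriv f) (↑x + ↑y * Complex.I)).im with hB
  have hxx : pdx (pdx W) (x, y) = v₁ * A + v₂ * B := by
    have hfn : (fun s : ℝ => pdx W (s, y)) = fun s : ℝ =>
        v₁ * (deriv f (↑s + ↑y * Complex.I)).re + v₂ * (deriv f (↑s + ↑y * Complex.I)).im := by
      funext s; exact hpdxW s y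
    have hd := ((reD (horizD (deriv f) hf' x y)).const_mul v₁).add
      ((imD (horizD (deriv f) hf' x y)).const_mul v₂)
    show deriv (fun s : ℝ => pdx W (s, y)) x = _
    rw [hfn]; exact hd.deriv
  have hyx : pdy (pdx W) (x, y) = v₁ * -B + v₂ * A := by
    have hfn : (fun t : ℝ => pdx W (x, t)) = fun t : ℝ =>
        v₁ * (deriv f (↑x + ↑t * Complex.I)).re + v₂ * (deriv f (↑x + ↑t * Complex.I)).im := by
      funext t; exact hpdxW x t
    have hd := ((reD (vertD (deriv f) hf' x y)).const_mul v₁).add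
      ((imD (vertD (deriv f) hf' x y)).const_mul v₂)
    show deriv (fun t : ℝ => pdx W (x, t)) y = _
    rw [hfn]
    simpa [Complex.mul_I_re, Complex.mul_I_im, Pi.add_def] using hd.deriv
  have hxy : pdx (pdy W) (x, y) = v₁ * -B + v₂ * A := by
    have hfn : (fun s : ℝ => pdy W (s, y)) = fun s : ℝ =>
        v₁ * -(deriv f (↑s + ↑y * Complex.I)).im + v₂ * (deriv f (↑s + ↑y * Complex.I)).re := by
      funext s; exact hpdyW s y
    have hd := (((imD (horizD (deriv f) hf' x y)).neg).const_mul v₁).add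
      ((reD (horizD (deriv f) hf' x y)).const_mul v₂)
    show deriv (fun s : ℝ => pdy W (s, y)) x = _
    rw [hfn]; exact hd.deriv
  have hyy : pdy (pdy W) (x, y) = -(v₁ * A + v₂ * B) := by
    have hfn : (fun t : ℝ => pdy W (x, t)) = fun t : ℝ =>
        v₁ * -(deriv f (↑x + ↑t * Complex.I)).im + v₂ * (deriv f (↑x + ↑t * Complex.I)).re := by
      funext t; exact hpdyW x t
    have hd := (((imD (vertD (deriv f) hf' x y)).neg).const_mul v₁).add
      ((reD (vertD (deriv f) hf' x y)).const_mul v₂)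
    show deriv (fun t : ℝ => pdy W (x, t)) y = _
    rw [hfn]
    have := hd.deriv
    simp only [Pi.add_def, Pi.neg_def] at this
    rw [this]
    simp [Complex.mul_I_re, Complex.mul_I_im]
    ring
  have hM : hess W (x, y) = !![v₁ * A + v₂ * B, v₁ * -B + v₂ * A;
      v₁ * -B + v₂ * A, -(v₁ * A + v₂ * B)] := by
    unfold hess
    rw [hxx, hyx, hxy, hyy]
  set c := ‖deriv (deriv f) (↑x + ↑y * Complex.I)‖ with hc
  have hc2 : c ^ 2 = A ^ 2 + B ^ 2 := by
    rw [hc, Complex.sq_norm, Complex.normSq_apply, hA, hB]; ring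
  have hkey : (v₁ * A + v₂ * B) ^ 2 + (v₁ * -B + v₂ * A) ^ 2 = c ^ 2 := by
    rw [hc2]; nlinarith [hv]
  constructor
  · rw [show hess W (x, y) = _ from hM]
    exact eigAux _ _ _ hkey
  · rw [show hess W (x, y) = _ from hM]
    exact eigAux _ _ _ (by rw [neg_sq]; exact hkey)
end
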